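/- If U_1 ~ Geometric(p) and S_0 ~ Poisson(v), then E[Y] = v(1 - G_v(q)), where G_v is the probability generating function of T and q = 1 - p. -/

import Mathlib

/-!
Both sides equal `∑ₙ p qⁿ v · P(T > n)`. On the left, `X T = 0` lets one write
`Y = ∑_{n < T} X (n + 1)`; up to a null set the event `{n < T}` is `{X 1, …, X n ≠ 0}`, which is
independent of `X (n + 1)`, a Poisson variable of mean `p qⁿ v` (Wald's identity). On the right,
`v (1 - q^T) = ∑_{n < T} p qⁿ v` is a geometric sum.
-/

open MeasureTheory ProbabilityTheory
open scoped ENNReal NNReal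

theorem Nat.lt_sInf_iff {P : ℕ → Prop} {n : ℕ} :
    n < sInf {m | P m} ↔ (∃ m, P m) ∧ ∀ k ≤ n, ¬ P k := by
  by_cases hP : ∃ m, P m
  · rw [Nat.lt_iff_add_one_le, le_csInf_iff' (s := {m | P m}) hP]
    simp only [mem_lowerBounds, Set.mem_ofPred_eq, hP, true_and]
    exact ⟨fun h k hk hPk => by have := h k hPk; omega,
      fun h m hPm => by by_contra! hm; exact h m (by omega) hPm⟩
  · have : {m | P m} = ∅ := Set.eq_empty_of_forall_notMem fun m hm => hP ⟨m, hm⟩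
    simp [this, hP]

theorem lt_sInf_one_le_and_eq_zero_iff (x : ℕ → ℕ) (n : ℕ) :
    n < sInf {m | 1 ≤ m ∧ x m = 0} ↔ (∃ m, 1 ≤ m ∧ x m = 0) ∧ ∀ k < n, x (k + 1) ≠ 0 := by
  rw [Nat.lt_sInf_iff]
  refine and_congr_right fun _ => ⟨fun h k hk => fun hx => h (k + 1) hk ⟨by omega, hx⟩, ?_⟩
  rintro h (_ | k) hk ⟨h1, hx⟩
  · omega
  · exact h k hk hx

theorem Finset.sum_Ico_one_eq_sum_range_of_eq_zero {M : Type*} [AddCommMonoid M] (f : ℕ → M)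
    {t : ℕ} (ht : f t = 0) : ∑ n ∈ Finset.Ico 1 t, f n = ∑ n ∈ Finset.range t, f (n + 1) := by
  cases t with
  | zero => simp
  | succ t => simp [Finset.sum_range_succ, ht, Finset.sum_Ico_eq_sum_range, add_comm]

theorem lintegral_natCast_poissonMeasure (r : ℝ≥0) :
    ∫⁻ n, (n : ℝ≥0∞) ∂poissonMeasure r = r := by
  have hmean : HasSum (fun n : ℕ => n * (Real.exp (-r) * r ^ n / n.factorial)) r := by
    have hshift := (hasSum_one_poissonMeasure r).mul_left (r : ℝ)
    have hterm : ∀ n : ℕ, ((n + 1 : ℕ) : ℝ) * (Real.exp (-r) * r ^ (n + 1) / (n + 1).factorial)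
        = r * (Real.exp (-r) * r ^ n / n.factorial) := by
      intro n
      rw [Nat.factorial_succ]
      push_cast
      field_simp
      ring
    rw [mul_one, ← funext hterm] at hshift
    have := (hasSum_nat_add_iff (f := fun n : ℕ => n * (Real.exp (-r) * r ^ n / n.factorial)) 1).mp
      hshift
    rwa [Finset.sum_range_one, Nat.cast_zero, zero_mul, add_zero] at this
  have hnonneg : ∀ n : ℕ, 0 ≤ (n : ℝ) * (Real.exp (-r) * r ^ n / n.factorial) :=
    fun n => by positivity
  calc ∫⁻ n, (n : ℝ≥0∞) ∂poissonMeasure r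
      = ∑' n : ℕ, ENNReal.ofReal (n * (Real.exp (-r) * r ^ n / n.factorial)) := by
        rw [poissonMeasure, lintegral_sum_measure]
        congr with n
        rw [lintegral_smul_measure, lintegral_dirac, smul_eq_mul,
          ENNReal.ofReal_mul (Nat.cast_nonneg n), ENNReal.ofReal_natCast, mul_comm]
    _ = r := by
        rw [← ENNReal.ofReal_tsum_of_nonneg hnonneg hmean.summable, hmean.tsum_eq,
          ENNReal.ofReal_coe_nnreal]

section

variable {Ω : Type*} [MeasurableSpace Ω] {μ : Measure Ω}

theorem measurable_sInf_setOf_mem {A : ℕ → Set Ω} (hA : ∀ m, MeasurableSet (A m)) :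
    Measurable fun ω => sInf {m | ω ∈ A m} := by
  refine measurable_of_Ioi fun n => ?_
  have hIoi : (fun ω => sInf {m | ω ∈ A m}) ⁻¹' Set.Ioi n = (⋃ m, A m) ∩ ⋂ k ≤ n, (A k)ᶜ := by
    ext ω
    simp [Nat.lt_sInf_iff]
  rw [hIoi]
  exact (MeasurableSet.iUnion hA).inter (.biInter (Set.to_countable _) fun k _ => (hA k).compl)

theorem lintegral_sum_range_eq_tsum_setLIntegral {T : Ω → ℕ} (hT : Measurable T)
    {a : ℕ → Ω → ℝ≥0∞} (ha : ∀ n, Measurable (a n)) :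
    ∫⁻ ω, ∑ n ∈ Finset.range (T ω), a n ω ∂μ = ∑' n, ∫⁻ ω in {ω | n < T ω}, a n ω ∂μ := by
  have hset : ∀ n, MeasurableSet {ω | n < T ω} := fun n => measurableSet_lt measurable_const hT
  simp_rw [← lintegral_indicator (hset _)]
  rw [← lintegral_tsum fun n => ((ha n).indicator (hset n)).aemeasurable]
  congr with ω
  rw [sum_eq_tsum_indicator]
  congr with n
  simp [Set.indicator_apply]

theorem setLIntegral_comp_eq_measure_mul_lintegral_of_iIndepFun {β : Type*} [MeasurableSpace β]
    {Z : ℕ → Ω → β} (hZm : ∀ i, Measurable (Z i)) (hZ : iIndepFun Z μ)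
    {f : β → ℝ≥0∞} (hf : Measurable f) {s : ℕ → Set β} (hs : ∀ i, MeasurableSet (s i)) (n : ℕ) :
    ∫⁻ ω in {ω | ∀ k < n, Z k ω ∈ s k}, f (Z n ω) ∂μ
      = μ {ω | ∀ k < n, Z k ω ∈ s k} * ∫⁻ ω, f (Z n ω) ∂μ := by
  set M : ℕ → MeasurableSpace Ω := fun i => MeasurableSpace.comap (Z i) inferInstance
  have hindep : Indep (⨆ i ∈ Set.Iio n, M i) (⨆ i ∈ ({n} : Set ℕ), M i) μ :=
    indep_iSup_of_disjoint (fun i => (hZm i).comap_le) hZ (by simp)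
  have hA : MeasurableSet[⨆ i ∈ Set.Iio n, M i] {ω | ∀ k < n, Z k ω ∈ s k} := by
    have : {ω | ∀ k < n, Z k ω ∈ s k} = ⋂ k ∈ Set.Iio n, Z k ⁻¹' s k := by ext; simp
    rw [this]
    exact .biInter (Set.to_countable _) fun k hk =>
      le_iSup₂ (f := fun i (_ : i ∈ Set.Iio n) => M i) k hk _ ⟨s k, hs k, rfl⟩
  have hfZ : Measurable[⨆ i ∈ ({n} : Set ℕ), M i] fun ω => f (Z n ω) :=
    (hf.comp (Measurable.of_comap_le le_rfl)).mono
      (le_iSup₂ (f := fun i (_ : i ∈ ({n} : Set ℕ)) => M i) n rfl) le_rfl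
  have hle : ∀ S : Set ℕ, ⨆ i ∈ S, M i ≤ ‹MeasurableSpace Ω› :=
    fun S => iSup₂_le fun i _ => (hZm i).comap_le
  have hAm : MeasurableSet {ω | ∀ k < n, Z k ω ∈ s k} := hle _ _ hA
  have hind : Measurable[⨆ i ∈ Set.Iio n, M i]
      ({ω | ∀ k < n, Z k ω ∈ s k}.indicator (1 : Ω → ℝ≥0∞)) :=
    measurable_const.indicator hA
  have hprod := lintegral_mul_eq_lintegral_mul_lintegral_of_independent_measurableSpace
    (hle _) (hle _) hindep hind hfZ
  rw [← lintegral_indicator hAm, ← lintegral_indicator_one hAm, ← hprod]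
  congr with ω
  by_cases hω : ω ∈ {ω | ∀ k < n, Z k ω ∈ s k} <;> simp [hω]

theorem lintegral_natCast_of_measure_eq_poisson {X : Ω → ℕ} (hX : Measurable X) {r : ℝ}
    (hr : 0 ≤ r)
    (hlaw : ∀ m : ℕ, μ {ω | X ω = m} = ENNReal.ofReal (Real.exp (-r) * r ^ m / m.factorial)) :
    ∫⁻ ω, (X ω : ℝ≥0∞) ∂μ = ENNReal.ofReal r := by
  have hPo : HasLaw X (poissonMeasure r.toNNReal) μ := by
    refine ⟨hX.aemeasurable, Measure.ext_iff_singleton.mpr fun m => ?_⟩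
    rw [Measure.map_apply hX (measurableSet_singleton m), poissonMeasure_singleton,
      Real.coe_toNNReal r hr]
    exact hlaw m
  rw [hPo.lintegral_comp measurable_from_nat.aemeasurable, lintegral_natCast_poissonMeasure]
  rfl

theorem ofReal_mul_one_sub_integral_pow_eq_tsum [IsProbabilityMeasure μ] {T : Ω → ℕ}
    (hT : Measurable T) {p : ℝ} (hp0 : 0 ≤ p) (hp1 : p ≤ 1) {v : ℝ} (hv : 0 ≤ v) :
    ENNReal.ofReal (v * (1 - ∫ ω, (1 - p) ^ T ω ∂μ))
      = ∑' n, ENNReal.ofReal (p * (1 - p) ^ n * v) * μ {ω | n < T ω} := by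
  have hq0 : 0 ≤ 1 - p := by linarith
  have hbound : ∀ ω, (1 - p) ^ T ω ≤ 1 := fun ω => pow_le_one₀ hq0 (by linarith)
  have hint : Integrable (fun ω => (1 - p) ^ T ω) μ :=
    .of_bound (measurable_from_nat.comp hT).aestronglyMeasurable 1 (ae_of_all _ fun ω => by
      rw [Real.norm_of_nonneg (by positivity)]; exact hbound ω)
  have hgeom : ∀ ω, v * (1 - (1 - p) ^ T ω) = ∑ n ∈ Finset.range (T ω), p * (1 - p) ^ n * v := by
    intro ω
    rw [← Finset.sum_mul, ← Finset.mul_sum, ← geom_sum_mul_neg, sub_sub_cancel]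
    ring
  calc ENNReal.ofReal (v * (1 - ∫ ω, (1 - p) ^ T ω ∂μ))
      = ENNReal.ofReal (∫ ω, v * (1 - (1 - p) ^ T ω) ∂μ) := by
        rw [integral_const_mul, integral_sub (integrable_const 1) hint, integral_const]
        simp
    _ = ∫⁻ ω, ENNReal.ofReal (v * (1 - (1 - p) ^ T ω)) ∂μ :=
        ofReal_integral_eq_lintegral_ofReal (((integrable_const 1).sub hint).const_mul v)
          (ae_of_all _ fun ω => mul_nonneg hv (sub_nonneg.mpr (hbound ω)))
    _ = ∫⁻ ω, ∑ n ∈ Finset.range (T ω), ENNReal.ofReal (p * (1 - p) ^ n * v) ∂μ := by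
        simp_rw [hgeom]
        congr with ω
        exact ENNReal.ofReal_sum_of_nonneg fun n _ => by positivity
    _ = _ := by
        simp_rw [lintegral_sum_range_eq_tsum_setLIntegral hT fun n => measurable_const,
          setLIntegral_const]

end

/-- **Expected total yield, geometric case.** If `U₁ ~ Geometric(p)` (so
`π n = p q^{n-1}`, `q = 1 - p`) and `S₀ ~ Poisson(v)` — equivalently the `X n` are
independent with `X n ~ Poisson(p q^{n-1} v)` — and `T = min {n ≥ 1 : X n = 0}`,
`Y = X 1 + ⋯ + X (T-1)`, then `E[Y] = v (1 - G_v(q))` where `G_v(z) = E[z^T]`. -/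
theorem expected_yield_geometric_poisson
    {Ω : Type*} [MeasurableSpace Ω] (μ : Measure Ω) [IsProbabilityMeasure μ]
    (p : ℝ) (hp : 0 < p ∧ p < 1) (q : ℝ) (hq : q = 1 - p)
    (v : ℝ) (hv : 0 < v)
    (X : ℕ → Ω → ℕ) (hXm : ∀ n, Measurable (X n))
    (hindep : iIndepFun (fun n : ℕ => X (n + 1)) μ)
    (hX : ∀ n, 1 ≤ n → ∀ m : ℕ, μ {ω | X n ω = m}
        = ENNReal.ofReal (Real.exp (-(p * q ^ (n - 1) * v)) * (p * q ^ (n - 1) * v) ^ m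
            / m.factorial))
    (T : Ω → ℕ) (hT : ∀ ω, T ω = sInf {n | 1 ≤ n ∧ X n ω = 0})
    (hTfin : ∀ᵐ ω ∂μ, ∃ n, 1 ≤ n ∧ X n ω = 0)
    (Y : Ω → ℕ) (hY : ∀ ω, Y ω = ∑ n ∈ Finset.Ico 1 (T ω), X n ω) :
    ∫⁻ ω, (Y ω : ℝ≥0∞) ∂μ
      = ENNReal.ofReal (v * (1 - ∫ ω, q ^ (T ω) ∂μ)) := by
  obtain ⟨hp0, hp1⟩ := hp
  subst hq
  have hTm : Measurable T := by
    rw [funext hT]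
    exact measurable_sInf_setOf_mem (A := fun m => {ω | 1 ≤ m ∧ X m ω = 0}) fun m =>
      (MeasurableSet.const (1 ≤ m)).inter (hXm m (measurableSet_singleton 0))
  have hTB : ∀ n, {ω | n < T ω} =ᵐ[μ] {ω | ∀ k < n, X (k + 1) ω ∈ ({0}ᶜ : Set ℕ)} := by
    intro n
    filter_upwards [hTfin] with ω hω
    change (n < T ω) = ∀ k < n, X (k + 1) ω ∈ ({0}ᶜ : Set ℕ)
    rw [hT, lt_sInf_one_le_and_eq_zero_iff]
    simp [hω]
  have hmean : ∀ n, ∫⁻ ω, (X (n + 1) ω : ℝ≥0∞) ∂μ = ENNReal.ofReal (p * (1 - p) ^ n * v) :=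
    fun n => lintegral_natCast_of_measure_eq_poisson (hXm _)
      (mul_nonneg (mul_nonneg hp0.le (pow_nonneg (by linarith) n)) hv.le)
      (by simpa using hX (n + 1) le_add_self)
  have hYsum : ∀ᵐ ω ∂μ, (Y ω : ℝ≥0∞) = ∑ n ∈ Finset.range (T ω), (X (n + 1) ω : ℝ≥0∞) := by
    filter_upwards [hTfin] with ω hω
    have hTzero : X (T ω) ω = 0 := by rw [hT]; exact (Nat.sInf_mem hω).2
    rw [hY, Finset.sum_Ico_one_eq_sum_range_of_eq_zero _ hTzero, Nat.cast_sum]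
  rw [ofReal_mul_one_sub_integral_pow_eq_tsum hTm hp0.le hp1.le hv.le, lintegral_congr_ae hYsum,
    lintegral_sum_range_eq_tsum_setLIntegral hTm fun n => by fun_prop]
  refine tsum_congr fun n => ?_
  rw [setLIntegral_congr (hTB n), setLIntegral_comp_eq_measure_mul_lintegral_of_iIndepFun
      (fun n => hXm _) hindep measurable_from_nat (fun _ => measurableSet_singleton 0 |>.compl) n,
    hmean, measure_congr (hTB n), mul_comm]
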